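/- arXiv:math/0702523 — 3 statements merged into one kernel-verified Lean document; each statement's English description precedes it below -/
import Mathlib

section
/- Let q be a real number with 0 < q and q ≠ 1. Define the modified q-Euler numbers 𝓔_{n,q} = [2]_q (1/(1−q))^n ∑_{l=0}^n C(n,l) (−1)^l / (1 + q^l). Then 𝓔_{0,q} = [2]_q/2, and for every integer n ≥ 1 one has ∑_{l=0}^n C(n,l) q^l 𝓔_{l,q} + 𝓔_{n,q} = 0; moreover for n = 0 one has ∑_{l=0}^0 C(0,l) q^l 𝓔_{l,q} + 𝓔_{0,q} = [2]_q. (In umbral notation: (q𝓔+1)^n + 𝓔_{n,q} equals [2]_q if n = 0 and 0 if n ≠ 0.) -/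
/-!
Write `𝓔_{l,q} = [2]_q a^l ∑_j C(l,j) c_j` with `a = 1/(1-q)` and `c_j = (-1)^j/(1+q^j)`.
Exchanging the order of summation, `∑_l C(n,l) q^l 𝓔_{l,q}` becomes
`[2]_q ∑_j C(n,j) c_j (qa)^j (qa+1)^{n-j}`, and `qa + 1 = a` collapses this to
`[2]_q a^n ∑_j C(n,j) c_j q^j`. Adding `𝓔_{n,q}` turns `c_j q^j + c_j` into `(-1)^j`,
and the alternating sum of binomial coefficients vanishes for `n ≥ 1`.
-/

/-- The modified `q`-Euler numbers
`𝓔_{n,q} = [2]_q (1/(1-q))^n ∑_{l=0}^n C(n,l) (-1)^l / (1+q^l)`. -/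
noncomputable def modqEulerNumber (q : ℝ) (n : ℕ) : ℝ :=
  (1 + q) * (1 / (1 - q)) ^ n *
    ∑ l ∈ Finset.range (n + 1), (n.choose l : ℝ) * (-1) ^ l / (1 + q ^ l)

open Finset

section Binomial

variable {R : Type*} [CommSemiring R]

theorem sum_range_choose_mul_choose_mul_pow (r : R) {n j : ℕ} (hj : j ≤ n) :
    ∑ l ∈ range (n + 1), (n.choose l * l.choose j : R) * r ^ l =
      n.choose j * r ^ j * (r + 1) ^ (n - j) := by
  obtain ⟨k, rfl⟩ := Nat.exists_eq_add_of_le hj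
  have below_j : ∑ l ∈ range j, ((j + k).choose l * l.choose j : R) * r ^ l = 0 :=
    sum_eq_zero fun l hl => by simp [Nat.choose_eq_zero_of_lt (mem_range.1 hl)]
  rw [add_assoc, sum_range_add, below_j, zero_add, Nat.add_sub_cancel_left,
    add_pow, mul_sum]
  refine sum_congr rfl fun m _ => ?_
  have hchoose : (j + k).choose (j + m) * (j + m).choose j = (j + k).choose j * k.choose m := by
    simpa using Nat.choose_mul (n := j + k) (k := j + m) (s := j) (by omega)
  rw [← Nat.cast_mul, hchoose, one_pow, pow_add]
  push_cast
  ring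

theorem sum_choose_mul_pow_mul_sum_choose (r : R) (c : ℕ → R) (n : ℕ) :
    ∑ l ∈ range (n + 1), n.choose l * r ^ l * ∑ j ∈ range (l + 1), l.choose j * c j =
      ∑ j ∈ range (n + 1), n.choose j * r ^ j * (r + 1) ^ (n - j) * c j := by
  calc _ = ∑ l ∈ range (n + 1), ∑ j ∈ range (n + 1),
          (n.choose l * l.choose j : R) * r ^ l * c j := by
        refine sum_congr rfl fun l hl => ?_
        rw [mul_sum]
        refine sum_subset (range_subset_range.2 (mem_range.1 hl)) (fun j _ hj => ?_) |>.trans ?_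
        · simp [Nat.choose_eq_zero_of_lt (not_lt.1 (mt mem_range.2 hj))]
        · exact sum_congr rfl fun j _ => by ring
    _ = ∑ j ∈ range (n + 1), ∑ l ∈ range (n + 1),
          (n.choose l * l.choose j : R) * r ^ l * c j := sum_comm
    _ = _ := sum_congr rfl fun j hj => by
        rw [← sum_mul, sum_range_choose_mul_choose_mul_pow r (mem_range_succ_iff.1 hj)]

end Binomial

theorem sum_range_neg_one_pow_mul_choose {R : Type*} [Ring R] {n : ℕ} (hn : n ≠ 0) :
    ∑ m ∈ range (n + 1), ((-1) ^ m * n.choose m : R) = 0 := by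
  exact_mod_cast congrArg (Int.cast : ℤ → R) (Int.alternating_sum_range_choose_of_ne hn)

theorem modqEulerNumber_zero (q : ℝ) : modqEulerNumber q 0 = (1 + q) / 2 := by
  norm_num [modqEulerNumber]
  ring

theorem sum_choose_mul_pow_mul_modqEulerNumber {q : ℝ} (hq1 : q ≠ 1) (n : ℕ) :
    ∑ l ∈ range (n + 1), (n.choose l : ℝ) * q ^ l * modqEulerNumber q l =
      (1 + q) * (1 / (1 - q)) ^ n *
        ∑ j ∈ range (n + 1), (n.choose j : ℝ) * (-1) ^ j * q ^ j / (1 + q ^ j) := by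
  set a : ℝ := 1 / (1 - q)
  have ha : q * a + 1 = a := by
    simp only [a]
    field_simp [sub_ne_zero.2 hq1.symm]
    ring
  have hexpand := sum_choose_mul_pow_mul_sum_choose (q * a) (fun j => (-1) ^ j / (1 + q ^ j)) n
  rw [ha] at hexpand
  calc _ = (1 + q) * ∑ l ∈ range (n + 1), (n.choose l : ℝ) * (q * a) ^ l *
          ∑ j ∈ range (l + 1), (l.choose j : ℝ) * ((-1) ^ j / (1 + q ^ j)) := by
        rw [mul_sum]
        refine sum_congr rfl fun l _ => ?_
        simp only [modqEulerNumber, mul_div_assoc]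
        ring
    _ = _ := by
        rw [hexpand, mul_sum, mul_sum]
        refine sum_congr rfl fun j hj => ?_
        rw [show a ^ n = a ^ j * a ^ (n - j) by
          rw [← pow_add, Nat.add_sub_cancel' (mem_range_succ_iff.1 hj)]]
        ring

/-- `𝓔_{0,q} = [2]_q/2`, `(q𝓔+1)^n + 𝓔_{n,q} = 0` for `n ≥ 1`, and
`(q𝓔+1)^0 + 𝓔_{0,q} = [2]_q`. -/
theorem modqEulerNumber_recurrence (q : ℝ) (hq0 : 0 < q) (hq1 : q ≠ 1) :
    modqEulerNumber q 0 = (1 + q) / 2 ∧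
    (∀ n : ℕ, 1 ≤ n →
      (∑ l ∈ Finset.range (n + 1), (n.choose l : ℝ) * q ^ l * modqEulerNumber q l)
        + modqEulerNumber q n = 0) ∧
    (∑ l ∈ Finset.range (0 + 1), ((0 : ℕ).choose l : ℝ) * q ^ l * modqEulerNumber q l)
      + modqEulerNumber q 0 = 1 + q := by
  refine ⟨modqEulerNumber_zero q, fun n hn => ?_, by simp [modqEulerNumber_zero]⟩
  have hterm : ∀ j ∈ range (n + 1),
      (n.choose j : ℝ) * (-1) ^ j * q ^ j / (1 + q ^ j) + n.choose j * (-1) ^ j / (1 + q ^ j) =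
        (-1) ^ j * n.choose j := fun j _ => by
    field_simp [(by positivity : (0 : ℝ) < 1 + q ^ j).ne']
    ring
  rw [sum_choose_mul_pow_mul_modqEulerNumber hq1, modqEulerNumber, ← mul_add,
    ← sum_add_distrib, sum_congr rfl hterm, sum_range_neg_one_pow_mul_choose (by omega),
    mul_zero]
end

section
/- Let q be a real number with 0 < q and q ≠ 1, let k be an odd positive integer, and let n ≥ 0 be an integer. Then 𝓔_{n,q} + 𝓔_{n,q}(k) = [2]_q ∑_{l=0}^{k−1} (−1)^l [l]_q^n (with the convention [0]_q^0 = 1). -/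
/-- The modified `q`-Euler polynomials
`𝓔_{n,q}(x) = [2]_q (1/(1-q))^n ∑_{l=0}^n C(n,l) (-1)^l q^{lx}/(1+q^l)`
(here `q ^ ((l : ℝ) * x)` is the real power `rpow`). -/
noncomputable def modqEulerPoly (q : ℝ) (n : ℕ) (x : ℝ) : ℝ :=
  (1 + q) * (1 / (1 - q)) ^ n *
    ∑ l ∈ Finset.range (n + 1),
      (n.choose l : ℝ) * (-1) ^ l * q ^ ((l : ℝ) * x) / (1 + q ^ l)

/-! For odd `k`, `(1 + q^{jk}) / (1 + q^j) = ∑_{l<k} (-q^j)^l`, so the two sums defining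
`𝓔_{n,q} + 𝓔_{n,q}(k)` combine into a double sum; exchanging the order of summation, the
inner sum over `j` is the binomial expansion of `(1 - q^l)^n`. -/

open Finset

theorem one_add_mul_sum_range_neg_pow_of_odd {R : Type*} [Ring R] (x : R) {k : ℕ}
    (hk : Odd k) : (1 + x) * ∑ l ∈ range k, (-x) ^ l = 1 + x ^ k := by
  simpa [hk.neg_pow] using mul_neg_geom_sum (-x) k

theorem one_sub_pow_eq_sum_choose {R : Type*} [CommRing R] (y : R) (n : ℕ) :
    (1 - y) ^ n = ∑ j ∈ range (n + 1), (n.choose j : R) * (-1) ^ j * y ^ j := by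
  rw [sub_eq_neg_add, add_pow]
  refine sum_congr rfl fun j _ => ?_
  rw [neg_pow]
  ring

theorem modqEulerPoly_natCast (q : ℝ) (n m : ℕ) :
    modqEulerPoly q n m = (1 + q) * (1 / (1 - q)) ^ n *
      ∑ j ∈ range (n + 1), (n.choose j : ℝ) * (-1) ^ j * (q ^ j) ^ m / (1 + q ^ j) := by
  unfold modqEulerPoly
  simp_rw [← Nat.cast_mul, Real.rpow_natCast, pow_mul]

theorem modqEuler_odd_sum_general (q : ℝ) (hq0 : 0 < q)
    (k : ℕ) (hko : Odd k) (n : ℕ) :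
    modqEulerPoly q n 0 + modqEulerPoly q n (k : ℝ) =
      (1 + q) * ∑ l ∈ Finset.range k, (-1) ^ l * ((1 - q ^ l) / (1 - q)) ^ n := by
  have hgeom (j : ℕ) : (1 + (q ^ j) ^ k) / (1 + q ^ j) = ∑ l ∈ range k, (-q ^ j) ^ l := by
    rw [div_eq_iff (by positivity), mul_comm, one_add_mul_sum_range_neg_pow_of_odd _ hko]
  calc modqEulerPoly q n 0 + modqEulerPoly q n (k : ℝ)
      = (1 + q) * (1 / (1 - q)) ^ n * ∑ j ∈ range (n + 1),
          (n.choose j : ℝ) * (-1) ^ j * ∑ l ∈ range k, (-q ^ j) ^ l := by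
        rw [← Nat.cast_zero, modqEulerPoly_natCast, modqEulerPoly_natCast, ← mul_add,
          ← sum_add_distrib]
        refine congrArg _ (sum_congr rfl fun j _ => ?_)
        rw [← hgeom]
        ring
    _ = (1 + q) * (1 / (1 - q)) ^ n * ∑ l ∈ range k, (-1) ^ l * (1 - q ^ l) ^ n := by
        congr 1
        simp_rw [one_sub_pow_eq_sum_choose, mul_sum]
        rw [sum_comm]
        exact sum_congr rfl fun l _ => sum_congr rfl fun j _ => by ring
    _ = (1 + q) * ∑ l ∈ Finset.range k, (-1) ^ l * ((1 - q ^ l) / (1 - q)) ^ n := by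
        rw [mul_assoc, mul_sum]
        exact congrArg _ (sum_congr rfl fun l _ => by simp only [div_pow]; ring)

/-- For odd positive `k`:
`𝓔_{n,q} + 𝓔_{n,q}(k) = [2]_q ∑_{l=0}^{k-1} (-1)^l [l]_q^n`. -/
theorem modqEuler_odd_sum (q : ℝ) (hq0 : 0 < q) (hq1 : q ≠ 1)
    (k : ℕ) (hk : 0 < k) (hko : Odd k) (n : ℕ) :
    modqEulerPoly q n 0 + modqEulerPoly q n (k : ℝ) =
      (1 + q) * ∑ l ∈ Finset.range k, (-1) ^ l * ((1 - q ^ l) / (1 - q)) ^ n :=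
  modqEuler_odd_sum_general q hq0 k hko n
end

section
/- Let p be an odd prime, let q ∈ ℚ_p satisfy |q−1|_p < 1, let f : ℤ_p → ℚ_p be continuous, and let n be a positive integer. Writing f_n(x) = f(x+n) and I_{−q}(g) = lim_{N→∞} ((1+q)/(1+q^{p^N})) ∑_{x=0}^{p^N−1} (−q)^x g(x) (both limits below exist), one has q^n·I_{−q}(f_n) + (−1)^{n−1}·I_{−q}(f) = [2]_q·∑_{l=0}^{n−1} (−1)^{n−1−l} q^l f(l), where [2]_q = 1+q. In particular, if n is odd then q^n I_{−q}(f_n) + I_{−q}(f) = [2]_q ∑_{l=0}^{n−1} (−1)^l q^l f(l), and if n is even then q^n I_{−q}(f_n) − I_{−q}(f) = [2]_q ∑_{l=0}^{n−1} (−1)^{l−1} q^l f(l). -/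
/-!
The Riemann sums `S_N(g) = (1 + q) / (1 + q ^ p ^ N) * ∑_{x < p ^ N} (-q) ^ x g(x)` are Cauchy:
as `p ^ N` is odd, `S_M(g) - S_N(g)` is a combination of the increments `g(x) - g(x mod p ^ N)`
with coefficients of norm `1` (because `‖1 + q ^ m‖ = ‖2‖ = 1` for odd `p`), and these increments
are uniformly small. Telescoping gives
`q S_N(g(· + 1)) + S_N(g) = (1 + q) / (1 + q ^ p ^ N) * (g(0) + q ^ p ^ N g(p ^ N))`, which tends to
`(1 + q) g(0)` since `q ^ p ^ N → 1` and `p ^ N → 0`. The resulting recurrence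
`q I(f_{k+1}) + I(f_k) = (1 + q) f(k)` is solved by telescoping `(-q) ^ k I(f_k)`.
-/

open Filter Finset Topology

section Algebra

lemma sum_pow_mul_apply_mod {R : Type*} [CommSemiring R] (a : R) (g : ℕ → R) (m n : ℕ) :
    ∑ x ∈ range (m * n), a ^ x * g (x % n) =
      (∑ j ∈ range m, (a ^ n) ^ j) * ∑ x ∈ range n, a ^ x * g x := by
  induction m with
  | zero => simp
  | succ m ih =>
    rw [Nat.succ_mul, sum_range_add, ih, sum_range_succ, add_mul]
    congr 1
    rw [mul_sum]
    refine sum_congr rfl fun x hx => ?_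
    rw [Nat.mul_add_mod_of_lt (mem_range.mp hx), pow_add, ← pow_mul, mul_comm n m, mul_assoc]

lemma sum_neg_pow_mul_shift {R : Type*} [CommRing R] (q : R) (g : ℕ → R) (n : ℕ) :
    q * ∑ x ∈ range n, (-q) ^ x * g (x + 1) + ∑ x ∈ range n, (-q) ^ x * g x =
      g 0 - (-q) ^ n * g n := by
  have := sum_range_sub' (fun x => (-q) ^ x * g x) n
  rw [pow_zero, one_mul] at this
  rw [← this, mul_sum, ← sum_add_distrib]
  exact sum_congr rfl fun x _ => by ring

lemma neg_pow_mul_eq_sub_sum {R : Type*} [CommRing R] {q : R} {J c : ℕ → R}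
    (h : ∀ k, q * J (k + 1) + J k = c k) (n : ℕ) :
    (-q) ^ n * J n = J 0 - ∑ l ∈ range n, (-q) ^ l * c l := by
  induction n with
  | zero => simp
  | succ n ih => rw [sum_range_succ, ← h n]; linear_combination ih

lemma neg_one_pow_sub {R : Type*} [Ring R] {m l : ℕ} (h : l ≤ m) :
    (-1 : R) ^ (m - l) = (-1) ^ m * (-1) ^ l := by
  conv_rhs => rw [← Nat.sub_add_cancel h, pow_add, mul_assoc, ← pow_add, ← two_mul, pow_mul,
    neg_one_sq, one_pow, mul_one]

variable {K : Type*} [Field K]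

/-- For `n = p ^ N` these are the Riemann sums whose limit is the fermionic integral `I_{-q}(g)`. -/
noncomputable def fermionicSum (q : K) (g : ℕ → K) (n : ℕ) : K :=
  (1 + q) / (1 + q ^ n) * ∑ x ∈ range n, (-q) ^ x * g x

lemma fermionicSum_mul_sub {q : K} (g : ℕ → K) {m n : ℕ} (hm : Odd m) (hn : Odd n)
    (hqn : 1 + q ^ n ≠ 0) (hqmn : 1 + q ^ (m * n) ≠ 0) :
    fermionicSum q g (m * n) - fermionicSum q g n =
      (1 + q) / (1 + q ^ (m * n)) * ∑ x ∈ range (m * n), (-q) ^ x * (g x - g (x % n)) := by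
  have hgeo : (∑ j ∈ range m, (-q ^ n) ^ j) * (1 + q ^ n) = 1 + q ^ (m * n) := by
    have := geom_sum_mul (-q ^ n) m
    rw [hm.neg_pow, ← pow_mul, mul_comm n m] at this
    linear_combination -this
  simp only [fermionicSum, mul_sub, sum_sub_distrib, sum_pow_mul_apply_mod, hn.neg_pow]
  field_simp
  linear_combination (1 + q) * (∑ x ∈ range n, (-q) ^ x * g x) * hgeo

lemma fermionicSum_shift {q : K} (g : ℕ → K) {n : ℕ} (hn : Odd n) :
    q * fermionicSum q (fun x => g (x + 1)) n + fermionicSum q g n =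
      (1 + q) / (1 + q ^ n) * (g 0 + q ^ n * g n) := by
  rw [fermionicSum, fermionicSum, mul_left_comm, ← mul_add, sum_neg_pow_mul_shift, hn.neg_pow]
  ring

end Algebra

section Ultrametric

variable {R : Type*} [NormedRing R] [NormOneClass R] [IsUltrametricDist R] {q : R}

lemma norm_eq_one_of_norm_sub_one_lt_one (hq : ‖q - 1‖ < 1) : ‖q‖ = 1 := by
  have h := IsUltrametricDist.norm_add_eq_max_of_norm_ne_norm (x := 1) (y := q - 1)
    (by rw [norm_one]; exact hq.ne')
  rwa [add_sub_cancel, norm_one, max_eq_left hq.le] at h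

lemma norm_pow_sub_one_lt_one (hq : ‖q - 1‖ < 1) (m : ℕ) : ‖q ^ m - 1‖ < 1 := by
  induction m with
  | zero => simp
  | succ m ih =>
    have hmul : ‖(q ^ m - 1) * q‖ < 1 :=
      (norm_mul_le _ _).trans_lt (by rwa [norm_eq_one_of_norm_sub_one_lt_one hq, mul_one])
    calc ‖q ^ (m + 1) - 1‖ = ‖(q ^ m - 1) * q + (q - 1)‖ := by
          rw [sub_mul, one_mul, ← pow_succ, sub_add_sub_cancel]
      _ ≤ max ‖(q ^ m - 1) * q‖ ‖q - 1‖ := IsUltrametricDist.norm_add_le_max _ _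
      _ < 1 := max_lt hmul hq

lemma norm_one_add_pow_eq_one (h2 : ‖(2 : R)‖ = 1) (hq : ‖q - 1‖ < 1) (m : ℕ) :
    ‖1 + q ^ m‖ = 1 := by
  have hlt := norm_pow_sub_one_lt_one hq m
  have h := IsUltrametricDist.norm_add_eq_max_of_norm_ne_norm (x := 2) (y := q ^ m - 1)
    (by rw [h2]; exact hlt.ne')
  rwa [h2, max_eq_left hlt.le, ← one_add_one_eq_two, add_add_sub_cancel] at h

end Ultrametric

namespace Padic

variable {p : ℕ} [Fact p.Prime]

instance : IsBoundedSMul ℤ_[p] ℚ_[p] :=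
  .of_norm_smul_le fun r x => by rw [Algebra.smul_def, norm_mul]; rfl

lemma norm_two_eq_one (hp : Odd p) : ‖(2 : ℚ_[p])‖ = 1 := by
  exact_mod_cast norm_natCast_eq_one_iff.mpr (Nat.coprime_two_right.mpr hp)

lemma tendsto_natCast_prime_pow_nhds_zero :
    Tendsto (fun N => ((p ^ N : ℕ) : ℤ_[p])) atTop (𝓝 0) := by
  simpa using tendsto_pow_atTop_nhds_zero_of_norm_lt_one
    (PadicInt.norm_natCast_lt_one_iff.mpr (dvd_refl p))

lemma norm_natCast_sub_natCast_mod_le (x n : ℕ) :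
    ‖(x : ℤ_[p]) - ((x % n : ℕ) : ℤ_[p])‖ ≤ ‖(n : ℤ_[p])‖ := by
  have h : (x : ℤ_[p]) - ((x % n : ℕ) : ℤ_[p]) = n * ((x / n : ℕ) : ℤ_[p]) := by
    rw [sub_eq_iff_eq_add]
    exact_mod_cast (Nat.div_add_mod x n).symm
  rw [h, norm_mul]
  exact mul_le_of_le_one_right (norm_nonneg _) (PadicInt.norm_le_one _)

/-- `x ↦ q ^ x` extends to a continuous additive character of `ℤ_[p]`, and `p ^ N → 0` in
`ℤ_[p]`. -/
lemma tendsto_pow_prime_pow_nhds_one {q : ℚ_[p]} (hq : ‖q - 1‖ < 1) :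
    Tendsto (fun N => q ^ p ^ N) atTop (𝓝 1) := by
  let κ := PadicInt.addChar_of_value_at_one (p := p) (q - 1)
    (tendsto_pow_atTop_nhds_zero_of_norm_lt_one hq)
  have hκ : ∀ m : ℕ, κ m = q ^ m := fun m => by
    rw [← nsmul_one, AddChar.map_nsmul_eq_pow, PadicInt.addChar_of_value_at_one_def,
      add_sub_cancel]
  have hcont : Continuous κ := PadicInt.continuous_addChar_of_value_at_one _
  simpa only [Function.comp_def, hκ, AddChar.map_zero_eq_one] using
    (hcont.tendsto 0).comp tendsto_natCast_prime_pow_nhds_zero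

variable {q : ℚ_[p]}

lemma norm_fermionicSum_sub_le (hp : Odd p) (hq : ‖q - 1‖ < 1) (g : ℕ → ℚ_[p]) {N M : ℕ}
    (hNM : N ≤ M) {ε : ℝ} (hε : 0 ≤ ε) (hg : ∀ x, ‖g x - g (x % p ^ N)‖ ≤ ε) :
    ‖fermionicSum q g (p ^ M) - fermionicSum q g (p ^ N)‖ ≤ ε := by
  obtain ⟨D, rfl⟩ := Nat.exists_eq_add_of_le hNM
  have hnorm : ∀ m, ‖1 + q ^ m‖ = 1 := norm_one_add_pow_eq_one (norm_two_eq_one hp) hq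
  have hne : ∀ m, 1 + q ^ m ≠ 0 := fun m => norm_ne_zero_iff.mp (by simp [hnorm])
  have h1q : ‖1 + q‖ = 1 := by simpa using hnorm 1
  rw [pow_add, mul_comm, fermionicSum_mul_sub g hp.pow hp.pow (hne _) (hne _), norm_mul,
    norm_div, h1q, hnorm, div_one, one_mul]
  refine IsUltrametricDist.norm_sum_le_of_forall_le_of_nonneg hε fun x _ => ?_
  rw [norm_mul, norm_pow, norm_neg, norm_eq_one_of_norm_sub_one_lt_one hq, one_pow, one_mul]
  exact hg x

lemma cauchySeq_fermionicSum (hp : Odd p) (hq : ‖q - 1‖ < 1) {f : ℤ_[p] → ℚ_[p]}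
    (hf : Continuous f) : CauchySeq fun N => fermionicSum q (fun x : ℕ => f x) (p ^ N) := by
  refine Metric.cauchySeq_iff'.mpr fun ε hε => ?_
  obtain ⟨δ, hδ, hfδ⟩ := Metric.uniformContinuous_iff.mp
    (CompactSpace.uniformContinuous_of_continuous hf) (ε / 2) (half_pos hε)
  obtain ⟨N, hN⟩ := ((tendsto_natCast_prime_pow_nhds_zero (p := p)).eventually
    (Metric.ball_mem_nhds 0 hδ)).exists
  refine ⟨N, fun M hM => (dist_eq_norm _ _).trans_lt ?_⟩
  refine (norm_fermionicSum_sub_le hp hq _ hM (half_pos hε).le fun x => ?_).trans_lt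
    (half_lt_self hε)
  rw [dist_zero_right] at hN
  rw [← dist_eq_norm]
  refine (hfδ ?_).le
  rw [dist_eq_norm]
  exact (norm_natCast_sub_natCast_mod_le x _).trans_lt hN

lemma mul_add_eq_of_tendsto_fermionicSum (hp : Odd p) (hq : ‖q - 1‖ < 1)
    {f : ℤ_[p] → ℚ_[p]} (hf : Continuous f) {J₀ J₁ : ℚ_[p]}
    (h₁ : Tendsto (fun N => fermionicSum q (fun x : ℕ => f (x + 1)) (p ^ N)) atTop (𝓝 J₁))
    (h₀ : Tendsto (fun N => fermionicSum q (fun x : ℕ => f x) (p ^ N)) atTop (𝓝 J₀)) :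
    q * J₁ + J₀ = (1 + q) * f 0 := by
  have hq1 := tendsto_pow_prime_pow_nhds_one hq
  have hf0 : Tendsto (fun N => f ((p ^ N : ℕ) : ℤ_[p])) atTop (𝓝 (f 0)) :=
    (hf.tendsto 0).comp tendsto_natCast_prime_pow_nhds_zero
  have hlim : Tendsto (fun N => (1 + q) / (1 + q ^ p ^ N) * (f 0 + q ^ p ^ N * f (p ^ N : ℕ)))
      atTop (𝓝 ((1 + q) / (1 + 1) * (f 0 + 1 * f 0))) :=
    (tendsto_const_nhds.div (tendsto_const_nhds.add hq1) (by norm_num)).mul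
      (tendsto_const_nhds.add (hq1.mul hf0))
  have hfin : ∀ N, q * fermionicSum q (fun x : ℕ => f (x + 1)) (p ^ N) +
      fermionicSum q (fun x : ℕ => f x) (p ^ N) =
      (1 + q) / (1 + q ^ p ^ N) * (f 0 + q ^ p ^ N * f ((p ^ N : ℕ) : ℤ_[p])) := fun N => by
    simpa only [Nat.cast_succ, Nat.cast_zero] using fermionicSum_shift (fun x : ℕ => f x) hp.pow
  rw [tendsto_nhds_unique (((h₁.const_mul q).add h₀).congr hfin) hlim]
  ring

end Padic

open Padic

/-- Iterated fermionic integral equation (Eq. (16)–(18)): for continuous `f : ℤ_p → ℚ_p`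
and `n ≥ 1`, with `f_n(x) = f(x+n)`, the fermionic Riemann sums for `f_n` and `f` converge
to limits `I_{-q}(f_n)`, `I_{-q}(f)` satisfying
`q^n I_{-q}(f_n) + (-1)^{n-1} I_{-q}(f) = [2]_q ∑_{l=0}^{n-1} (-1)^{n-1-l} q^l f(l)`;
in particular the odd and even special cases (17) and (18) hold. -/
theorem fermionic_integral_iterated (p : ℕ) [Fact (Nat.Prime p)] (hp : Odd p)
    (q : ℚ_[p]) (hq : ‖q - 1‖ < 1) (f : ℤ_[p] → ℚ_[p]) (hf : Continuous f)
    (n : ℕ) (hn : 0 < n) :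
    ∃ Iₙ I₀ : ℚ_[p],
      Filter.Tendsto
        (fun N : ℕ => ((1 + q) / (1 + q ^ p ^ N)) *
          ∑ x ∈ Finset.range (p ^ N), (-q) ^ x * f ((x : ℤ_[p]) + (n : ℤ_[p])))
        Filter.atTop (nhds Iₙ) ∧
      Filter.Tendsto
        (fun N : ℕ => ((1 + q) / (1 + q ^ p ^ N)) *
          ∑ x ∈ Finset.range (p ^ N), (-q) ^ x * f (x : ℤ_[p]))
        Filter.atTop (nhds I₀) ∧
      q ^ n * Iₙ + (-1) ^ (n - 1) * I₀ =
        (1 + q) * ∑ l ∈ Finset.range n, (-1) ^ (n - 1 - l) * q ^ l * f (l : ℤ_[p]) ∧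
      (Odd n → q ^ n * Iₙ + I₀ =
        (1 + q) * ∑ l ∈ Finset.range n, (-1) ^ l * q ^ l * f (l : ℤ_[p])) ∧
      (Even n → q ^ n * Iₙ - I₀ =
        (1 + q) * ∑ l ∈ Finset.range n, (-1) ^ (l + 1) * q ^ l * f (l : ℤ_[p])) := by
  choose J hJ using fun k : ℕ => cauchySeq_tendsto_of_complete
    (cauchySeq_fermionicSum hp hq (f := fun y => f (y + k)) (by fun_prop))
  have hrec : ∀ k, q * J (k + 1) + J k = (1 + q) * f k := fun k => by
    simpa using mul_add_eq_of_tendsto_fermionicSum hp hq (f := fun y => f (y + k))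
      (by fun_prop) (by simpa only [Nat.cast_succ, ← add_assoc, add_right_comm] using hJ (k + 1))
      (hJ k)
  have key := neg_pow_mul_eq_sub_sum hrec n
  have hsum : ∑ l ∈ range n, (-q) ^ l * ((1 + q) * f l) =
      (1 + q) * ∑ l ∈ range n, (-1) ^ l * q ^ l * f l := by
    rw [mul_sum]
    exact sum_congr rfl fun l _ => by ring
  rw [hsum] at key
  have hJ0 := hJ 0
  simp only [Nat.cast_zero, add_zero] at hJ0
  refine ⟨J n, J 0, hJ n, hJ0, ?_, fun ho => ?_, fun he => ?_⟩
  · have hsign : (-1 : ℚ_[p]) ^ (n - 1) * (-1) ^ n = -1 := by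
      rw [← pow_add]
      exact Odd.neg_one_pow ⟨n - 1, by omega⟩
    have hsum' : ∑ l ∈ range n, (-1) ^ (n - 1 - l) * q ^ l * f l =
        (-1) ^ (n - 1) * ∑ l ∈ range n, (-1) ^ l * q ^ l * f l := by
      rw [mul_sum]
      exact sum_congr rfl fun l hl => by
        rw [neg_one_pow_sub (by have := mem_range.mp hl; omega)]; ring
    rw [hsum']
    rw [neg_pow q] at key
    linear_combination (-(-1) ^ (n - 1)) * key + q ^ n * J n * hsign
  · rw [ho.neg_pow] at key
    linear_combination -key
  · rw [he.neg_pow] at key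
    simp only [pow_succ, mul_neg_one, neg_mul, sum_neg_distrib]
    linear_combination key
end
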